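/- Bias decomposition: for any estimated propensities p̂ > 0 and imputations ê, E_O[E^DR] − P = (1/|D|) Σ_{(u,i)∈D} ((p_{u,i} − p̂_{u,i})/p̂_{u,i}) (e_{u,i} − ê_{u,i}), so the DR bias is controlled by the product of propensity errors and imputation errors; in particular, by Cauchy–Schwarz, |E_O[E^DR] − P| ≤ (1/|D|) sqrt( Σ Δ_{u,i}² ) · sqrt( Σ δ_{u,i}² ). -/

import Mathlib

open Finset

/-- Expectation over independent Bernoulli observation indicators. -/
noncomputable def expVal {D : Type*} [Fintype D] [DecidableEq D] (p : D → ℝ) (f : (D → Bool) → ℝ) : ℝ :=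
  ∑ o : D → Bool, (∏ d, if o d then p d else 1 - p d) * f o

/-!
Taking expectations is linear and `E[o d] = p d`, so the DR estimator has mean
`(1/|D|) Σ (ê + p δ / p̂)`; subtracting `P = (1/|D|) Σ (ê + δ)` leaves `(1/|D|) Σ Δ δ`,
and the bound is Cauchy–Schwarz applied to `|Σ Δ δ| ≤ Σ |Δ| |δ|`.
-/

theorem Real.abs_sum_mul_le_sqrt_mul_sqrt {ι : Type*} (s : Finset ι) (f g : ι → ℝ) :
    |∑ i ∈ s, f i * g i| ≤ √(∑ i ∈ s, f i ^ 2) * √(∑ i ∈ s, g i ^ 2) :=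
  calc |∑ i ∈ s, f i * g i|
      ≤ ∑ i ∈ s, |f i| * |g i| := by
        simpa only [abs_mul] using abs_sum_le_sum_abs (fun i => f i * g i) s
    _ ≤ √(∑ i ∈ s, |f i| ^ 2) * √(∑ i ∈ s, |g i| ^ 2) := Real.sum_mul_le_sqrt_mul_sqrt _ _ _
    _ = √(∑ i ∈ s, f i ^ 2) * √(∑ i ∈ s, g i ^ 2) := by simp only [sq_abs]

section expVal

variable {D : Type*} [Fintype D] [DecidableEq D] (p : D → ℝ)

theorem sum_pi_bool_prod (g : D → Bool → ℝ) :
    ∑ o : D → Bool, ∏ d, g d (o d) = ∏ d, (g d true + g d false) := by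
  simp only [← Fintype.prod_sum, Fintype.sum_bool]

theorem expVal_const (c : ℝ) : expVal p (fun _ => c) = c := by
  rw [expVal, ← sum_mul, sum_pi_bool_prod (fun d b => if b then p d else 1 - p d)]
  simp

theorem expVal_add (f g : (D → Bool) → ℝ) :
    expVal p (fun o => f o + g o) = expVal p f + expVal p g := by
  simp only [expVal, mul_add, sum_add_distrib]

theorem expVal_const_mul (c : ℝ) (f : (D → Bool) → ℝ) :
    expVal p (fun o => c * f o) = c * expVal p f := by
  simp only [expVal, mul_sum, mul_left_comm]

theorem expVal_mul_const (f : (D → Bool) → ℝ) (c : ℝ) :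
    expVal p (fun o => f o * c) = expVal p f * c := by
  simp only [mul_comm _ c, expVal_const_mul]

theorem expVal_sum {ι : Type*} (s : Finset ι) (f : ι → (D → Bool) → ℝ) :
    expVal p (fun o => ∑ i ∈ s, f i o) = ∑ i ∈ s, expVal p (f i) := by
  simp only [expVal, mul_sum]
  exact sum_comm

theorem expVal_indicator (d₀ : D) : expVal p (fun o => if o d₀ then 1 else 0) = p d₀ := by
  -- Absorbing the indicator into the `d₀`-th factor keeps the weight a product over `d`.
  have absorb : ∀ o : D → Bool, (∏ d, if o d then p d else 1 - p d) * (if o d₀ then 1 else 0)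
      = ∏ d, (if o d then p d else 1 - p d) * (if d = d₀ then (if o d then 1 else 0) else 1) := by
    intro o
    rw [prod_mul_distrib, prod_ite_eq' univ d₀]
    simp
  rw [expVal, Fintype.sum_congr _ _ absorb, sum_pi_bool_prod (fun d b =>
    (if b then p d else 1 - p d) * (if d = d₀ then (if b then 1 else 0) else 1)),
    Fintype.prod_eq_single d₀ fun d hd => by simp [hd]]
  simp

end expVal

theorem dr_estimator_sub_target_term {e ehat p phat : ℝ} (hphat : phat ≠ 0) :
    ehat + p * ((e - ehat) / phat) - e = (p - phat) / phat * (e - ehat) := by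
  field_simp
  ring

theorem dr_bias_decomposition_general {D : Type*} [Fintype D] [DecidableEq D]
    (e ehat p phat : D → ℝ)
    (hphat : ∀ d, 0 < phat d) :
    expVal p (fun o => (Fintype.card D : ℝ)⁻¹ *
        ∑ d, (ehat d + (if o d then (1 : ℝ) else 0) * (e d - ehat d) / phat d))
      - (Fintype.card D : ℝ)⁻¹ * ∑ d, e d
      = (Fintype.card D : ℝ)⁻¹ * ∑ d, ((p d - phat d) / phat d) * (e d - ehat d) ∧
    |expVal p (fun o => (Fintype.card D : ℝ)⁻¹ *
        ∑ d, (ehat d + (if o d then (1 : ℝ) else 0) * (e d - ehat d) / phat d))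
      - (Fintype.card D : ℝ)⁻¹ * ∑ d, e d|
      ≤ (Fintype.card D : ℝ)⁻¹ * Real.sqrt (∑ d, ((p d - phat d) / phat d) ^ 2) *
          Real.sqrt (∑ d, (e d - ehat d) ^ 2) := by
  have mean : expVal p (fun o => (Fintype.card D : ℝ)⁻¹ *
        ∑ d, (ehat d + (if o d then (1 : ℝ) else 0) * (e d - ehat d) / phat d))
      = (Fintype.card D : ℝ)⁻¹ * ∑ d, (ehat d + p d * ((e d - ehat d) / phat d)) := by
    simp only [expVal_const_mul, expVal_sum, expVal_add, expVal_const,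
      expVal_mul_const, expVal_indicator, mul_div_assoc]
  have bias : expVal p (fun o => (Fintype.card D : ℝ)⁻¹ *
        ∑ d, (ehat d + (if o d then (1 : ℝ) else 0) * (e d - ehat d) / phat d))
      - (Fintype.card D : ℝ)⁻¹ * ∑ d, e d
      = (Fintype.card D : ℝ)⁻¹ * ∑ d, ((p d - phat d) / phat d) * (e d - ehat d) := by
    rw [mean, ← mul_sub, ← sum_sub_distrib]
    simp only [dr_estimator_sub_target_term (hphat _).ne']
  refine ⟨bias, ?_⟩
  rw [bias, abs_mul, abs_of_nonneg (by positivity), mul_assoc]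
  gcongr
  exact Real.abs_sum_mul_le_sqrt_mul_sqrt _ _ _

/-- Bias decomposition of the DR estimator, and the Cauchy–Schwarz bound on the bias. -/
theorem dr_bias_decomposition {D : Type*} [Fintype D] [DecidableEq D] [Nonempty D]
    (e ehat p phat : D → ℝ)
    (hp : ∀ d, 0 < p d ∧ p d ≤ 1) (hphat : ∀ d, 0 < phat d) :
    expVal p (fun o => (Fintype.card D : ℝ)⁻¹ *
        ∑ d, (ehat d + (if o d then (1 : ℝ) else 0) * (e d - ehat d) / phat d))
      - (Fintype.card D : ℝ)⁻¹ * ∑ d, e d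
      = (Fintype.card D : ℝ)⁻¹ * ∑ d, ((p d - phat d) / phat d) * (e d - ehat d) ∧
    |expVal p (fun o => (Fintype.card D : ℝ)⁻¹ *
        ∑ d, (ehat d + (if o d then (1 : ℝ) else 0) * (e d - ehat d) / phat d))
      - (Fintype.card D : ℝ)⁻¹ * ∑ d, e d|
      ≤ (Fintype.card D : ℝ)⁻¹ * Real.sqrt (∑ d, ((p d - phat d) / phat d) ^ 2) *
          Real.sqrt (∑ d, (e d - ehat d) ^ 2) :=
  dr_bias_decomposition_general e ehat p phat hphat
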